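/- Let q ≥ 2, n ≥ 2, and let A = {α_1, …, α_k} ⊆ Σ_q × Σ_q be a length-two label set such that the labeling map L_A : Σ_q^n → {0,1,…,k}^n is injective. Then there exist a ∈ {0,1,…,n−1} and b ∈ {0,1,…,k} such that the code C = {x ∈ Σ_q^n : L_A(x) ∈ T_{a,b}(n; k+1)} is a single-deletion A-labeling code and |C| ≥ q^n / ((k+1)·n). -/
import Mathlib


/-- Lists obtained from `u` by deleting at most one coordinate. -/
def delBall1 {σ : Type*} (u : List σ) : Set (List σ) :=
  insert u {v | ∃ i < u.length, v = u.eraseIdx i}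
/-- The `A`-labeling sequence of `x`, where the length-two label set
`A = {α₁ < ⋯ < α_k}` is given by the tuple `α` (1-indexed labels; `0` means
"no label starts here", and the last coordinate is always `0`). -/
noncomputable def labelFun {q k n : ℕ} (α : Fin k → Fin q × Fin q)
    (x : Fin n → Fin q) : Fin n → Fin (k + 1) := fun i =>
  if h : (i : ℕ) + 1 < n then
    if h2 : ∃ j, α j = (x i, x ⟨(i : ℕ) + 1, h⟩) then (h2.choose).succ else 0
  else 0
/-- The signature vector of `y`: `s(y)ᵢ = 1` iff `y_{i+1} ≥ yᵢ`. -/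
def signature {p n : ℕ} (y : Fin n → Fin p) : Fin (n - 1) → Fin 2 := fun i =>
  if y ⟨(i : ℕ), by have := i.isLt; omega⟩ ≤ y ⟨(i : ℕ) + 1, by have := i.isLt; omega⟩
  then 1 else 0

/-- Membership in the Tenengolts code `T_{a,b}(n; p)`:
`s(y) ∈ VT_a(n-1)` and `Σ yᵢ ≡ b (mod p)`. -/
def TenengoltsCond {p n : ℕ} (a b : ℕ) (y : Fin n → Fin p) : Prop :=
  (∑ i : Fin (n - 1), ((i : ℕ) + 1) * (signature y i : ℕ)) % n = a ∧
  (∑ i, (y i : ℕ)) % p = b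


lemma sttChainLe (f : ℕ → ℕ) (i j : ℕ) (h : ∀ m, i ≤ m → m < j → f m ≤ f (m + 1)) :
    ∀ a b, i ≤ a → a ≤ b → b ≤ j → f a ≤ f b := by
  intro a b ha hab
  induction b, hab using Nat.le_induction with
  | base => intro _; exact le_refl _
  | succ b hab ih => intro hbj; exact le_trans (ih (by omega)) (h b (by omega) (by omega))

lemma sttChainLt (f : ℕ → ℕ) (i j : ℕ) (h : ∀ m, i ≤ m → m < j → f (m + 1) < f m) :
    ∀ a b, i ≤ a → a < b → b ≤ j → f b < f a := by
  intro a b ha hab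
  induction b, hab using Nat.le_induction with
  | base => intro h1; exact h a ha (by omega)
  | succ b hab ih => intro hbj; exact lt_trans (h b (by omega) (by omega)) (ih (by omega))

lemma sttSumShift (f : ℕ → ℕ) (a b : ℕ) :
    ∑ m ∈ Finset.Ico a b, f (m + 1) = ∑ m ∈ Finset.Ico (a + 1) (b + 1), f m := by
  rw [Finset.sum_Ico_eq_sum_range, Finset.sum_Ico_eq_sum_range]
  rw [show b + 1 - (a + 1) = b - a by omega]
  exact Finset.sum_congr rfl fun m _ => by rw [show a + 1 + m = a + m + 1 by omega]

lemma sttBit (a c d : ℕ) :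
    (if a ≤ d then (1:ℕ) else 0) = (if a ≤ c then 1 else 0) ∨
    (if a ≤ d then (1:ℕ) else 0) = (if c ≤ d then 1 else 0) := by
  split_ifs <;> omega

lemma sttVT (N : ℕ) (b b' : ℕ → ℕ) (hb : ∀ m, m < N → b m ≤ 1) (hb' : ∀ m, m < N → b' m ≤ 1)
    (u w : ℕ) (huw : u ≤ w) (hwN : w < N)
    (g1 : ∀ m, m < u → b' m = b m)
    (g2 : ∀ m, u ≤ m → m < w → b' m = b (m + 1))
    (g3 : ∀ m, w < m → m < N → b' m = b m)
    (hsyn : (∑ m ∈ Finset.range N, (m + 1) * b m) % (N + 1)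
          = (∑ m ∈ Finset.range N, (m + 1) * b' m) % (N + 1)) :
    ∀ m, m < N → b' m = b m := by
  have hA : ∑ m ∈ Finset.range N, (m + 1) * b m
      = (∑ m ∈ Finset.Ico 0 u, (m + 1) * b m + ∑ m ∈ Finset.Ico (w+1) N, (m + 1) * b m
         + ∑ m ∈ Finset.Ico (u+1) (w+1), m * b m)
        + ((u + 1) * b u + ∑ m ∈ Finset.Ico (u+1) (w+1), b m) := by
    rw [Finset.range_eq_Ico,
        ← Finset.sum_Ico_consecutive (fun m => (m+1) * b m) (Nat.zero_le u) (show u ≤ N by omega),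
        ← Finset.sum_Ico_consecutive (fun m => (m+1) * b m) (show u ≤ w+1 by omega)
            (show w+1 ≤ N by omega),
        Finset.sum_eq_sum_Ico_succ_bot (show u < w+1 by omega)]
    have e : ∑ m ∈ Finset.Ico (u+1) (w+1), (m+1) * b m
         = ∑ m ∈ Finset.Ico (u+1) (w+1), m * b m + ∑ m ∈ Finset.Ico (u+1) (w+1), b m := by
      rw [← Finset.sum_add_distrib]; exact Finset.sum_congr rfl fun m _ => by ring
    rw [e]; ring
  have hB : ∑ m ∈ Finset.range N, (m + 1) * b' m
      = (∑ m ∈ Finset.Ico 0 u, (m + 1) * b m + ∑ m ∈ Finset.Ico (w+1) N, (m + 1) * b m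
         + ∑ m ∈ Finset.Ico (u+1) (w+1), m * b m)
        + (w + 1) * b' w := by
    rw [Finset.range_eq_Ico,
        ← Finset.sum_Ico_consecutive (fun m => (m+1) * b' m) (Nat.zero_le u) (show u ≤ N by omega),
        ← Finset.sum_Ico_consecutive (fun m => (m+1) * b' m) (show u ≤ w+1 by omega)
            (show w+1 ≤ N by omega),
        Finset.sum_Ico_succ_top (show u ≤ w by omega)]
    have e1 : ∑ m ∈ Finset.Ico 0 u, (m+1) * b' m = ∑ m ∈ Finset.Ico 0 u, (m+1) * b m :=
      Finset.sum_congr rfl fun m hm => by rw [g1 m (Finset.mem_Ico.mp hm).2]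
    have e2 : ∑ m ∈ Finset.Ico u w, (m+1) * b' m = ∑ m ∈ Finset.Ico (u+1) (w+1), m * b m := by
      calc ∑ m ∈ Finset.Ico u w, (m+1) * b' m
          = ∑ m ∈ Finset.Ico u w, (m+1) * b (m+1) :=
            Finset.sum_congr rfl fun m hm => by
              rw [g2 m (Finset.mem_Ico.mp hm).1 (Finset.mem_Ico.mp hm).2]
        _ = ∑ m ∈ Finset.Ico (u+1) (w+1), m * b m := sttSumShift (fun t => t * b t) u w
    have e3 : ∑ m ∈ Finset.Ico (w+1) N, (m+1) * b' m
        = ∑ m ∈ Finset.Ico (w+1) N, (m+1) * b m :=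
      Finset.sum_congr rfl fun m hm => by
        rw [g3 m (Finset.mem_Ico.mp hm).1 (Finset.mem_Ico.mp hm).2]
    rw [e1, e2, e3]; ring
  have key : (u + 1) * b u + ∑ m ∈ Finset.Ico (u+1) (w+1), b m = (w + 1) * b' w := by
    have hcong : ((∑ m ∈ Finset.Ico 0 u, (m + 1) * b m + ∑ m ∈ Finset.Ico (w+1) N, (m + 1) * b m
         + ∑ m ∈ Finset.Ico (u+1) (w+1), m * b m)
        + ((u + 1) * b u + ∑ m ∈ Finset.Ico (u+1) (w+1), b m)) % (N+1)
        = ((∑ m ∈ Finset.Ico 0 u, (m + 1) * b m + ∑ m ∈ Finset.Ico (w+1) N, (m + 1) * b m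
         + ∑ m ∈ Finset.Ico (u+1) (w+1), m * b m)
        + ((w + 1) * b' w)) % (N+1) := by
      rw [← hA, ← hB]; exact hsyn
    have hmEq : ((u + 1) * b u + ∑ m ∈ Finset.Ico (u+1) (w+1), b m) % (N+1)
        = ((w + 1) * b' w) % (N+1) := Nat.ModEq.add_left_cancel' _ hcong
    have hR : ∑ m ∈ Finset.Ico (u+1) (w+1), b m ≤ w - u := by
      calc ∑ m ∈ Finset.Ico (u+1) (w+1), b m ≤ ∑ _m ∈ Finset.Ico (u+1) (w+1), 1 :=
            Finset.sum_le_sum fun m hm => hb m (by have := Finset.mem_Ico.mp hm; omega)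
        _ = w - u := by rw [Finset.sum_const, Nat.card_Ico, smul_eq_mul, mul_one]; omega
    have hbu := hb u (by omega)
    have hbw := hb' w hwN
    have hlt1 : (u + 1) * b u + ∑ m ∈ Finset.Ico (u+1) (w+1), b m < N + 1 := by
      have := Nat.mul_le_mul_left (u+1) hbu; omega
    have hlt2 : (w + 1) * b' w < N + 1 := by
      have := Nat.mul_le_mul_left (w+1) hbw; omega
    rw [Nat.mod_eq_of_lt hlt1, Nat.mod_eq_of_lt hlt2] at hmEq; exact hmEq
  have hbu := hb u (by omega)
  have hbw := hb' w hwN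
  have hR : ∑ m ∈ Finset.Ico (u+1) (w+1), b m ≤ w - u := by
    calc ∑ m ∈ Finset.Ico (u+1) (w+1), b m ≤ ∑ _m ∈ Finset.Ico (u+1) (w+1), 1 :=
          Finset.sum_le_sum fun m hm => hb m (by have := Finset.mem_Ico.mp hm; omega)
      _ = w - u := by rw [Finset.sum_const, Nat.card_Ico, smul_eq_mul, mul_one]; omega
  have hbits : b' w = b u ∧ ∀ m, u + 1 ≤ m → m ≤ w → b m = b u := by
    rcases Nat.le_one_iff_eq_zero_or_eq_one.mp hbu with h0 | h0 <;>
      rcases Nat.le_one_iff_eq_zero_or_eq_one.mp hbw with h1 | h1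
    · -- 0 0
      rw [h0, h1] at key
      simp only [mul_zero, zero_add] at key
      have hz := (Finset.sum_eq_zero_iff).mp key
      exact ⟨by omega, fun m hm1 hm2 => by
        rw [h0]; exact hz m (Finset.mem_Ico.mpr ⟨hm1, by omega⟩)⟩
    · -- 0 1
      rw [h0, h1] at key; simp only [mul_zero, zero_add, mul_one] at key; omega
    · -- 1 0
      rw [h0, h1] at key; simp only [mul_one, mul_zero] at key; omega
    · -- 1 1
      rw [h0, h1] at key; simp only [mul_one] at key
      have hRR : ∑ m ∈ Finset.Ico (u+1) (w+1), b m = w - u := by omega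
      refine ⟨by omega, fun m hm1 hm2 => ?_⟩
      rw [h0]
      by_contra hne
      have hm0 : b m = 0 := by have := hb m (by omega); omega
      have hmem : m ∈ Finset.Ico (u+1) (w+1) := Finset.mem_Ico.mpr ⟨hm1, by omega⟩
      have hsp := Finset.sum_erase_add (Finset.Ico (u+1) (w+1)) b hmem
      have hbound : ∑ x ∈ (Finset.Ico (u+1) (w+1)).erase m, b x
          ≤ ((Finset.Ico (u+1) (w+1)).erase m).card • 1 :=
        Finset.sum_le_card_nsmul _ _ _ fun x hx => by
          have hx' := Finset.mem_Ico.mp (Finset.mem_of_mem_erase hx)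
          exact hb x (by omega)
      rw [Finset.card_erase_of_mem hmem, Nat.card_Ico, smul_eq_mul, mul_one] at hbound
      omega
  obtain ⟨hbw', hbetween⟩ := hbits
  intro m hm
  by_cases hmu : m < u
  · exact g1 m hmu
  by_cases hmw : w < m
  · exact g3 m hmw hm
  by_cases hmw2 : m < w
  · have e1 : b' m = b (m+1) := g2 m (by omega) hmw2
    have e2 : b (m+1) = b u := hbetween (m+1) (by omega) (by omega)
    have e3 : b m = b u := by
      rcases eq_or_lt_of_le (show u ≤ m by omega) with h | h
      · rw [← h]
      · exact hbetween m (by omega) (by omega)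
    rw [e1, e2, e3]
  · have hmw' : m = w := by omega
    subst hmw'
    rw [hbw']
    rcases eq_or_lt_of_le huw with h | h
    · rw [h]
    · exact (hbetween m (by omega) le_rfl).symm

lemma sttCore (n p : ℕ) (hn : 2 ≤ n) (Y Y' B B' : ℕ → ℕ) (i j : ℕ)
    (hij : i ≤ j) (hjn : j < n)
    (hYp : Y i < p) (hY'p : Y' j < p)
    (hBdef : ∀ m, B m = if Y m ≤ Y (m + 1) then 1 else 0)
    (hB'def : ∀ m, B' m = if Y' m ≤ Y' (m + 1) then 1 else 0)
    (h1 : ∀ m, m < i → Y' m = Y m)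
    (h2 : ∀ m, i ≤ m → m < j → Y' m = Y (m + 1))
    (h3 : ∀ m, j < m → m < n → Y' m = Y m)
    (hsum : (∑ m ∈ Finset.range n, Y m) % p = (∑ m ∈ Finset.range n, Y' m) % p)
    (hsyn : (∑ m ∈ Finset.range (n - 1), (m + 1) * B m) % n
          = (∑ m ∈ Finset.range (n - 1), (m + 1) * B' m) % n) :
    ∀ m, m < n → Y' m = Y m := by
  have hin : i < n := by omega
  have HS : (∑ m ∈ Finset.range n, Y' m) + Y i = (∑ m ∈ Finset.range n, Y m) + Y' j := by
    have d1 : ∑ m ∈ Finset.range n, Y' m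
        = ∑ m ∈ Finset.Ico 0 i, Y m + (∑ m ∈ Finset.Ico (i+1) (j+1), Y m
          + (Y' j + ∑ m ∈ Finset.Ico (j+1) n, Y m)) := by
      rw [Finset.range_eq_Ico,
          ← Finset.sum_Ico_consecutive Y' (Nat.zero_le i) (show i ≤ n by omega),
          ← Finset.sum_Ico_consecutive Y' (show i ≤ j by omega) (show j ≤ n by omega),
          Finset.sum_eq_sum_Ico_succ_bot (show j < n by omega) Y']
      have e1 : ∑ m ∈ Finset.Ico 0 i, Y' m = ∑ m ∈ Finset.Ico 0 i, Y m :=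
        Finset.sum_congr rfl fun m hm => h1 m (Finset.mem_Ico.mp hm).2
      have e2 : ∑ m ∈ Finset.Ico i j, Y' m = ∑ m ∈ Finset.Ico (i+1) (j+1), Y m := by
        calc ∑ m ∈ Finset.Ico i j, Y' m = ∑ m ∈ Finset.Ico i j, Y (m+1) :=
              Finset.sum_congr rfl fun m hm =>
                h2 m (Finset.mem_Ico.mp hm).1 (Finset.mem_Ico.mp hm).2
          _ = _ := sttSumShift Y i j
      have e3 : ∑ m ∈ Finset.Ico (j+1) n, Y' m = ∑ m ∈ Finset.Ico (j+1) n, Y m :=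
        Finset.sum_congr rfl fun m hm =>
          h3 m (by have := (Finset.mem_Ico.mp hm).1; omega) (Finset.mem_Ico.mp hm).2
      rw [e1, e2, e3]
    have d2 : ∑ m ∈ Finset.range n, Y m
        = ∑ m ∈ Finset.Ico 0 i, Y m + ((Y i + ∑ m ∈ Finset.Ico (i+1) (j+1), Y m)
          + ∑ m ∈ Finset.Ico (j+1) n, Y m) := by
      rw [Finset.range_eq_Ico,
          ← Finset.sum_Ico_consecutive Y (Nat.zero_le i) (show i ≤ n by omega),
          ← Finset.sum_Ico_consecutive Y (show i ≤ j+1 by omega) (show j+1 ≤ n by omega),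
          Finset.sum_eq_sum_Ico_succ_bot (show i < j+1 by omega) Y]
    omega
  have hc : Y' j = Y i := by
    have hmod : Nat.ModEq p (∑ m ∈ Finset.range n, Y m) (∑ m ∈ Finset.range n, Y' m) := hsum
    have h' : Nat.ModEq p ((∑ m ∈ Finset.range n, Y' m) + Y i)
        ((∑ m ∈ Finset.range n, Y' m) + Y' j) := by
      rw [HS]; exact Nat.ModEq.add_right _ hmod
    have hfin : Nat.ModEq p (Y i) (Y' j) := Nat.ModEq.add_left_cancel' _ h'
    have : Y i % p = Y' j % p := hfin
    rw [Nat.mod_eq_of_lt hYp, Nat.mod_eq_of_lt hY'p] at this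
    exact this.symm
  rcases eq_or_lt_of_le hij with hijeq | hij'
  · intro m hm
    rcases lt_trichotomy m i with h | h | h
    · exact h1 m h
    · rw [h, hijeq, hc, hijeq]
    · exact h3 m (by omega) hm
  · -- i < j
    have fa : ∀ m, m + 1 < i → B' m = B m := fun m hm => by
      rw [hBdef, hB'def, h1 m (by omega), h1 (m+1) hm]
    have fc : ∀ m, i ≤ m → m + 1 < j → B' m = B (m+1) := fun m hm1 hm2 => by
      rw [hBdef, hB'def, h2 m hm1 (by omega), h2 (m+1) (by omega) hm2]
    have fd : B' (j-1) = if Y j ≤ Y i then 1 else 0 := by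
      have e1 : Y' (j-1) = Y j := by
        have := h2 (j-1) (by omega) (by omega)
        rw [show j - 1 + 1 = j by omega] at this; exact this
      have e2 : Y' (j-1+1) = Y i := by rw [show j-1+1 = j by omega]; exact hc
      rw [hB'def, e1, e2]
    have fe : ∀ m, j < m → m + 1 < n → B' m = B m := fun m hm1 hm2 => by
      rw [hBdef, hB'def, h3 m hm1 (by omega), h3 (m+1) (by omega) hm2]
    have ffj : j + 1 < n → B' j = if Y i ≤ Y (j+1) then 1 else 0 := fun hj1 => by
      rw [hB'def, hc, h3 (j+1) (by omega) hj1]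
    have fbB : i ≠ 0 → B' (i-1) = if Y (i-1) ≤ Y (i+1) then 1 else 0 := fun hi0 => by
      have e1 : Y' (i-1) = Y (i-1) := h1 _ (by omega)
      have e2 : Y' (i-1+1) = Y (i+1) := by
        rw [show i-1+1 = i by omega]; exact h2 i le_rfl hij'
      rw [hB'def, e1, e2]
    have hexu : ∃ u, u ≤ i ∧ (∀ m, m < u → B' m = B m)
        ∧ (∀ m, u ≤ m → m < i → B' m = B (m+1)) := by
      by_cases hi0 : i = 0
      · exact ⟨0, by omega, fun m hm => absurd hm (by omega),
          fun m hm1 hm2 => absurd hm2 (by omega)⟩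
      by_cases hcs : (if Y (i-1) ≤ Y (i+1) then (1:ℕ) else 0) = B i
      · refine ⟨i - 1, by omega, fun m hm => fa m (by omega), fun m hm1 hm2 => ?_⟩
        have hmm : m = i - 1 := by omega
        rw [hmm, show i - 1 + 1 = i by omega, fbB hi0, hcs]
      · refine ⟨i, le_rfl, fun m hm => ?_, fun m hm1 hm2 => absurd hm2 (by omega)⟩
        rcases lt_or_ge (m+1) i with h | h
        · exact fa m h
        · have hmi : m = i - 1 := by omega
          have hBi1 : B (i-1) = if Y (i-1) ≤ Y i then 1 else 0 := by
            rw [hBdef, show i-1+1 = i by omega]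
          rw [hmi, fbB hi0]
          rcases sttBit (Y (i-1)) (Y i) (Y (i+1)) with hbit | hbit
          · rw [hbit]; exact hBi1.symm
          · exact absurd (hbit.trans (hBdef i).symm) hcs
    obtain ⟨u, hui, gu1, gu2⟩ := hexu
    have hexw : ∃ w, j - 1 ≤ w ∧ w ≤ j ∧ w < n - 1 ∧ (w = j → B' (j-1) = B j)
        ∧ (∀ m, w < m → m < n - 1 → B' m = B m) := by
      by_cases hj1 : j + 1 < n
      · by_cases hcs : B' j = B j
        · refine ⟨j - 1, le_rfl, by omega, by omega, fun h => absurd h (by omega),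
            fun m hm1 hm2 => ?_⟩
          rcases eq_or_lt_of_le (show j ≤ m by omega) with h | h
          · rw [← h]; exact hcs
          · exact fe m h (by omega)
        · refine ⟨j, by omega, le_rfl, by omega, fun _ => ?_,
            fun m hm1 hm2 => fe m hm1 (by omega)⟩
          rcases sttBit (Y j) (Y i) (Y (j+1)) with hbit | hbit
          · rw [fd, hBdef]; exact hbit.symm
          · exact absurd ((ffj hj1).trans (hbit.symm.trans (hBdef j).symm)) hcs
      · refine ⟨j - 1, le_rfl, by omega, by omega, fun h => absurd h (by omega),
          fun m hm1 hm2 => absurd hm2 (by omega)⟩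
    obtain ⟨w, hwj, hwj2, hwn, gww, gw3⟩ := hexw
    have hg2 : ∀ m, u ≤ m → m < w → B' m = B (m+1) := by
      intro m hm1 hm2
      rcases lt_or_ge m i with h | h
      · exact gu2 m hm1 h
      rcases lt_or_ge (m+1) j with h' | h'
      · exact fc m h h'
      · have hm : m = j - 1 := by omega
        have hwjj : w = j := by omega
        rw [hm, show j - 1 + 1 = j by omega]
        exact gww hwjj
    have hsyn' : (∑ m ∈ Finset.range (n-1), (m+1) * B m) % ((n-1)+1)
               = (∑ m ∈ Finset.range (n-1), (m+1) * B' m) % ((n-1)+1) := by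
      rw [show n - 1 + 1 = n by omega]; exact hsyn
    have hble : ∀ m, m < n-1 → B m ≤ 1 := fun m _ => by rw [hBdef]; split <;> omega
    have hble' : ∀ m, m < n-1 → B' m ≤ 1 := fun m _ => by rw [hB'def]; split <;> omega
    have hEq := sttVT (n-1) B B' hble hble' u w (by omega) hwn gu1 hg2 gw3 hsyn'
    have hconst : ∀ m, i ≤ m → m ≤ j - 1 → B m = B i := by
      intro m
      induction m with
      | zero =>
        intro h1' hx
        have hz : i = 0 := by omega
        exact (congrArg B hz).symm
      | succ m ih =>
        intro h1' h2'
        rcases eq_or_lt_of_le h1' with h | h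
        · rw [h]
        · have e1 : B' m = B (m+1) := fc m (by omega) (by omega)
          have e2 : B' m = B m := hEq m (by omega)
          rw [← e1, e2]
          exact ih (by omega) (by omega)
    have hj1B : B (j-1) = if Y j ≤ Y i then 1 else 0 := by
      rw [← hEq (j-1) (by omega)]; exact fd
    have hBji : B (j-1) = B i := hconst (j-1) (by omega) le_rfl
    by_cases hYi : Y i ≤ Y (i+1)
    · have hBi1 : B i = 1 := by rw [hBdef, if_pos hYi]
      have hle : ∀ m, i ≤ m → m < j → Y m ≤ Y (m+1) := by
        intro m hm1 hm2
        have hcm := hconst m hm1 (by omega)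
        rw [hBdef, hBi1] at hcm
        by_contra hcon
        rw [if_neg hcon] at hcm; omega
      have hmono := sttChainLe Y i j hle
      have hYji : Y j ≤ Y i := by
        have hx := hBji
        rw [hj1B, hBi1] at hx
        by_contra hcon
        rw [if_neg hcon] at hx; omega
      have hallc : ∀ m, i ≤ m → m ≤ j → Y m = Y i := fun m hm1 hm2 =>
        le_antisymm (le_trans (hmono m j hm1 hm2 le_rfl) hYji) (hmono i m le_rfl hm1 (by omega))
      intro m hm
      rcases lt_or_ge m i with h | h
      · exact h1 m h
      rcases lt_or_ge m j with h' | h'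
      · rw [h2 m h h', hallc (m+1) (by omega) (by omega), hallc m h (by omega)]
      rcases eq_or_lt_of_le h' with h'' | h''
      · rw [← h'', hc]; exact (hallc j (by omega) le_rfl).symm
      · exact h3 m h'' hm
    · exfalso
      have hBi0 : B i = 0 := by rw [hBdef, if_neg hYi]
      have hlt : ∀ m, i ≤ m → m < j → Y (m+1) < Y m := by
        intro m hm1 hm2
        have hcm := hconst m hm1 (by omega)
        rw [hBdef, hBi0] at hcm
        by_contra hcon
        rw [if_pos (by omega : Y m ≤ Y (m+1))] at hcm; omega
      have hYji : Y j < Y i := sttChainLt Y i j hlt i j le_rfl hij' le_rfl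
      have hx : (if Y j ≤ Y i then (1:ℕ) else 0) = 0 := by rw [← hj1B, hBji, hBi0]
      rw [if_pos (le_of_lt hYji)] at hx
      omega

lemma sttAux (n p : ℕ) (hn : 2 ≤ n) (a b : ℕ) (y y' : Fin n → Fin p)
    (hy : TenengoltsCond a b y) (hy' : TenengoltsCond a b y')
    (i j : ℕ) (hi : i < n) (hj : j < n) (hij : i ≤ j)
    (h : (List.ofFn y).eraseIdx i = (List.ofFn y').eraseIdx j) : y = y' := by
  classical
  let Y : ℕ → ℕ := fun m => if h : m < n then (y ⟨m, h⟩ : ℕ) else 0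
  let Y' : ℕ → ℕ := fun m => if h : m < n then (y' ⟨m, h⟩ : ℕ) else 0
  have hYval : ∀ (m : ℕ) (hm : m < n), Y m = (y ⟨m, hm⟩ : ℕ) := fun m hm => dif_pos hm
  have hY'val : ∀ (m : ℕ) (hm : m < n), Y' m = (y' ⟨m, hm⟩ : ℕ) := fun m hm => dif_pos hm
  have hlen : ((List.ofFn y).eraseIdx i).length = n - 1 := by
    rw [List.length_eraseIdx]
    simp [hi]
  have key : ∀ m, m < n - 1 →
      (if m < i then Y m else Y (m+1)) = (if m < j then Y' m else Y' (m+1)) := by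
    intro m hm
    have hml : m < ((List.ofFn y).eraseIdx i).length := by omega
    have hgl := List.getElem_of_eq h hml
    rw [List.getElem_eraseIdx, List.getElem_eraseIdx] at hgl
    by_cases hc1 : m < i <;> by_cases hc2 : m < j
    · rw [dif_pos hc1, dif_pos hc2, List.getElem_ofFn, List.getElem_ofFn] at hgl
      rw [if_pos hc1, if_pos hc2, hYval m (by omega), hY'val m (by omega)]
      exact congrArg Fin.val hgl
    · rw [dif_pos hc1, dif_neg hc2, List.getElem_ofFn, List.getElem_ofFn] at hgl
      rw [if_pos hc1, if_neg hc2, hYval m (by omega), hY'val (m+1) (by omega)]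
      exact congrArg Fin.val hgl
    · rw [dif_neg hc1, dif_pos hc2, List.getElem_ofFn, List.getElem_ofFn] at hgl
      rw [if_neg hc1, if_pos hc2, hYval (m+1) (by omega), hY'val m (by omega)]
      exact congrArg Fin.val hgl
    · rw [dif_neg hc1, dif_neg hc2, List.getElem_ofFn, List.getElem_ofFn] at hgl
      rw [if_neg hc1, if_neg hc2, hYval (m+1) (by omega), hY'val (m+1) (by omega)]
      exact congrArg Fin.val hgl
  have h1' : ∀ m, m < i → Y' m = Y m := by
    intro m hm
    have hk := key m (by omega)
    rw [if_pos hm, if_pos (by omega : m < j)] at hk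
    exact hk.symm
  have h2' : ∀ m, i ≤ m → m < j → Y' m = Y (m+1) := by
    intro m hm1 hm2
    have hk := key m (by omega)
    rw [if_neg (by omega), if_pos hm2] at hk
    exact hk.symm
  have h3' : ∀ m, j < m → m < n → Y' m = Y m := by
    intro m hm1 hm2
    have hk := key (m-1) (by omega)
    rw [if_neg (by omega), if_neg (by omega), show m - 1 + 1 = m by omega] at hk
    exact hk.symm
  have hsum1 : ∑ m ∈ Finset.range n, Y m = ∑ t : Fin n, (y t : ℕ) := by
    rw [← Fin.sum_univ_eq_sum_range Y n]
    exact Finset.sum_congr rfl fun t _ => by rw [hYval t t.isLt]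
  have hsum1' : ∑ m ∈ Finset.range n, Y' m = ∑ t : Fin n, (y' t : ℕ) := by
    rw [← Fin.sum_univ_eq_sum_range Y' n]
    exact Finset.sum_congr rfl fun t _ => by rw [hY'val t t.isLt]
  have hsumc : (∑ m ∈ Finset.range n, Y m) % p = (∑ m ∈ Finset.range n, Y' m) % p := by
    rw [hsum1, hsum1']
    exact hy.2.trans hy'.2.symm
  let B : ℕ → ℕ := fun m => if Y m ≤ Y (m+1) then 1 else 0
  let B' : ℕ → ℕ := fun m => if Y' m ≤ Y' (m+1) then 1 else 0
  have hsig : ∀ t : Fin (n-1), ((signature y t : ℕ)) = B (t : ℕ) := by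
    intro t
    have htn : (t : ℕ) < n - 1 := t.isLt
    show _ = if Y (t : ℕ) ≤ Y ((t : ℕ) + 1) then 1 else 0
    rw [hYval (t : ℕ) (by omega), hYval ((t : ℕ) + 1) (by omega)]
    simp only [signature, apply_ite (Fin.val (n := 2)), Fin.val_one, Fin.val_zero, Fin.le_def]
  have hsig' : ∀ t : Fin (n-1), ((signature y' t : ℕ)) = B' (t : ℕ) := by
    intro t
    have htn : (t : ℕ) < n - 1 := t.isLt
    show _ = if Y' (t : ℕ) ≤ Y' ((t : ℕ) + 1) then 1 else 0
    rw [hY'val (t : ℕ) (by omega), hY'val ((t : ℕ) + 1) (by omega)]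
    simp only [signature, apply_ite (Fin.val (n := 2)), Fin.val_one, Fin.val_zero, Fin.le_def]
  have hsyn1 : ∑ t : Fin (n-1), ((t : ℕ) + 1) * (signature y t : ℕ)
      = ∑ m ∈ Finset.range (n-1), (m+1) * B m := by
    rw [← Fin.sum_univ_eq_sum_range (fun m => (m+1) * B m) (n-1)]
    exact Finset.sum_congr rfl fun t _ => by rw [hsig t]
  have hsyn1' : ∑ t : Fin (n-1), ((t : ℕ) + 1) * (signature y' t : ℕ)
      = ∑ m ∈ Finset.range (n-1), (m+1) * B' m := by
    rw [← Fin.sum_univ_eq_sum_range (fun m => (m+1) * B' m) (n-1)]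
    exact Finset.sum_congr rfl fun t _ => by rw [hsig' t]
  have hsync : (∑ m ∈ Finset.range (n-1), (m+1) * B m) % n
      = (∑ m ∈ Finset.range (n-1), (m+1) * B' m) % n := by
    rw [← hsyn1, ← hsyn1']
    exact hy.1.trans hy'.1.symm
  have hres := sttCore n p hn Y Y' B B' i j hij hj
    (by rw [hYval i hi]; exact (y ⟨i, hi⟩).isLt)
    (by rw [hY'val j hj]; exact (y' ⟨j, hj⟩).isLt)
    (fun m => rfl) (fun m => rfl) h1' h2' h3' hsumc hsync
  funext t
  have hrt := hres t t.isLt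
  rw [hY'val t t.isLt, hYval t t.isLt] at hrt
  exact (Fin.val_injective hrt).symm

lemma sttDel (n p : ℕ) (hn : 2 ≤ n) (a b : ℕ) (y y' : Fin n → Fin p)
    (hy : TenengoltsCond a b y) (hy' : TenengoltsCond a b y')
    (i j : ℕ) (hi : i < n) (hj : j < n)
    (h : (List.ofFn y).eraseIdx i = (List.ofFn y').eraseIdx j) : y = y' := by
  rcases le_total i j with hij | hij
  · exact sttAux n p hn a b y y' hy hy' i j hi hj hij h
  · exact (sttAux n p hn a b y' y hy' hy j i hj hi hij h.symm).symm

/-- If the labeling map `L_A : Σ_q^n → {0,…,k}^n` of a length-two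
label set `A = {α₁ < ⋯ < α_k}` is injective, then there exist `a < n` and `b ≤ k`
such that `C = {x : L_A(x) ∈ T_{a,b}(n; k+1)}` is a single-deletion `A`-labeling
code with `|C| ≥ q^n / ((k+1)·n)`. -/
theorem stmt4 (q n k : ℕ) (hq : 2 ≤ q) (hn : 2 ≤ n)
    (α : Fin k → Fin q × Fin q) (hlex : StrictMono fun j => toLex (α j))
    (hLinj : Function.Injective (labelFun (n := n) α)) :
    ∃ a < n, ∃ b < k + 1,
      (q : ℝ) ^ n / (((k : ℝ) + 1) * (n : ℝ)) ≤
        (({x : Fin n → Fin q | TenengoltsCond a b (labelFun α x)}).ncard : ℝ) ∧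
      ∀ x ∈ {x : Fin n → Fin q | TenengoltsCond a b (labelFun α x)},
        ∀ x' ∈ {x : Fin n → Fin q | TenengoltsCond a b (labelFun α x)}, x ≠ x' →
          ∀ v : List (Fin (k + 1)),
            v ∈ delBall1 (List.ofFn (labelFun α x)) →
            v ∈ delBall1 (List.ofFn (labelFun α x')) → False := by
  classical
  set t : Finset (ℕ × ℕ) := Finset.range n ×ˢ Finset.range (k+1) with ht
  set f : (Fin n → Fin q) → ℕ × ℕ := fun x =>
    ((∑ s : Fin (n-1), ((s : ℕ) + 1) * (signature (labelFun α x) s : ℕ)) % n,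
     (∑ s, (labelFun α x s : ℕ)) % (k+1)) with hf
  have hmaps : ∀ x : Fin n → Fin q, x ∈ (Finset.univ : Finset (Fin n → Fin q)) → f x ∈ t := by
    intro x _
    simp only [hf, ht, Finset.mem_product, Finset.mem_range]
    exact ⟨Nat.mod_lt _ (by omega), Nat.mod_lt _ (by omega)⟩
  have hcardsum := Finset.card_eq_sum_card_fiberwise hmaps
  have hcu : (Finset.univ : Finset (Fin n → Fin q)).card = q ^ n := by
    simp [Fintype.card_fun]
  have htcard : t.card = n * (k+1) := by simp [ht]
  have htne : t.Nonempty := ⟨(0,0), by simp [ht]; omega⟩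
  have hpig : ∃ ab ∈ t, (q:ℝ)^n / (((k:ℝ)+1) * n)
      ≤ ((Finset.univ.filter (fun x => f x = ab)).card : ℝ) := by
    by_contra hcon
    push_neg at hcon
    have hsumlt := Finset.sum_lt_sum_of_nonempty htne hcon
    have hk0 : (0:ℝ) < (k:ℝ) + 1 := by positivity
    have hn0 : (0:ℝ) < (n:ℝ) := by exact_mod_cast (by omega : 0 < n)
    have hL : ∑ ab ∈ t, ((Finset.univ.filter (fun x => f x = ab)).card : ℝ) = (q:ℝ)^n := by
      rw [← Nat.cast_sum, ← hcardsum, hcu]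
      push_cast
      ring
    have hR : ∑ _ab ∈ t, ((q:ℝ)^n / (((k:ℝ)+1) * n)) = (q:ℝ)^n := by
      rw [Finset.sum_const, htcard, nsmul_eq_mul]
      push_cast
      field_simp
    rw [hL, hR] at hsumlt
    exact lt_irrefl _ hsumlt
  obtain ⟨⟨a, b⟩, habt, hge⟩ := hpig
  have habt' : a < n ∧ b < k + 1 := by simpa [ht, Finset.mem_product] using habt
  refine ⟨a, habt'.1, b, habt'.2, ?_, ?_⟩
  · have hset : {x : Fin n → Fin q | TenengoltsCond a b (labelFun α x)}
        = ↑(Finset.univ.filter (fun x => f x = (a, b))) := by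
      ext x
      simp only [Set.mem_setOf_eq, Finset.coe_filter, Finset.mem_univ, true_and, hf,
        Prod.mk.injEq]
      exact Iff.rfl
    rw [hset, Set.ncard_coe_finset]
    exact hge
  · intro x hx x' hx' hne v hv hv'
    simp only [Set.mem_setOf_eq] at hx hx'
    have hyne : labelFun α x ≠ labelFun α x' := fun hcon => hne (hLinj hcon)
    simp only [delBall1, Set.mem_insert_iff, Set.mem_setOf_eq, List.length_ofFn] at hv hv'
    rcases hv with rfl | ⟨i, hi, rfl⟩
    · rcases hv' with hv' | ⟨j, hj, hv'⟩
      · exact hyne (List.ofFn_injective hv')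
      · have hlen := congrArg List.length hv'
        rw [List.length_ofFn, List.length_eraseIdx, List.length_ofFn, if_pos hj] at hlen
        omega
    · rcases hv' with hv' | ⟨j, hj, hv'⟩
      · have hlen := congrArg List.length hv'
        rw [List.length_ofFn, List.length_eraseIdx, List.length_ofFn, if_pos hi] at hlen
        omega
      · exact hyne (sttDel n (k+1) hn a b _ _ hx hx' i j hi hj hv')
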